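/- arXiv:2112.12512 — 5 statements merged into one kernel-verified Lean document; each statement's English description precedes it below -/
import Mathlib

section
/- For every even Δ ≥ 2, there exists a planar graph G with maximum degree Δ such that χ₂(G) ≥ (3Δ/2) + 1. -/
/-!
Wegner's graph for `Δ = 2 * m + 2`: hubs `x`, `y`, `z` with the edges `x - y` and `y - z`, joined
by `m` paths of length two from `x` to `y`, `m` from `y` to `z` and `m + 1` from `x` to `z`. Each
hub has degree `Δ` and every other vertex degree `2`. Any two vertices are adjacent or have a hub
as common neighbour, so the square is complete on `3 * m + 4 = 3 * Δ / 2 + 1` vertices. A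
straight-line drawing with the hubs on a horizontal line shows planarity.
-/

open SimpleGraph

/-- The square of a graph `G`: two distinct vertices are adjacent iff they are at
distance at most 2 in `G`. -/
def SimpleGraph.square {V : Type*} (G : SimpleGraph V) : SimpleGraph V where
  Adj u v := u ≠ v ∧ (G.Adj u v ∨ ∃ w, G.Adj u w ∧ G.Adj w v)
  symm := ⟨fun u v ⟨h1, h2⟩ => ⟨h1.symm, h2.elim (fun h => Or.inl h.symm)
    (fun ⟨w, h3, h4⟩ => Or.inr ⟨w, h4.symm, h3.symm⟩)⟩⟩
  loopless := ⟨fun _ h => h.1 rfl⟩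

/-- The 2-chromatic number of a graph: the chromatic number of its square. -/
noncomputable def chi2 {V : Type*} (G : SimpleGraph V) : ℕ∞ :=
  G.square.chromaticNumber

/-- The degree of a vertex, as a cardinality (instance-free). -/
noncomputable def degN {V : Type*} (G : SimpleGraph V) (v : V) : ℕ :=
  Nat.card {u // G.Adj v u}

/-- `G` has maximum degree `Δ`. -/
def maxDegIs {V : Type*} (G : SimpleGraph V) (Δ : ℕ) : Prop :=
  (∀ v, degN G v ≤ Δ) ∧ ∃ v, degN G v = Δ

/-- A graph is planar if it has a drawing in the plane: an injective placement of the
vertices and, for each edge, a simple arc joining the endpoints, such that arcs avoid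
all vertex points and the interiors of arcs of distinct edges are disjoint. -/
def IsPlanar {V : Type*} (G : SimpleGraph V) : Prop :=
  ∃ (pos : V → ℝ × ℝ) (arc : V → V → ℝ → ℝ × ℝ),
    Function.Injective pos ∧
    (∀ u v, G.Adj u v →
      Continuous (arc u v) ∧ arc u v 0 = pos u ∧ arc u v 1 = pos v ∧
      Set.InjOn (arc u v) (Set.Icc 0 1) ∧
      ∀ w, pos w ∉ arc u v '' Set.Ioo 0 1) ∧
    ∀ u v x y, G.Adj u v → G.Adj x y → s(u, v) ≠ s(x, y) →
      Disjoint (arc u v '' Set.Ioo 0 1) (arc x y '' Set.Ioo 0 1)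

open Function

theorem IsPlanar.comap {V W : Type*} {G : SimpleGraph W} (h : IsPlanar G) {f : V → W}
    (hf : Injective f) : IsPlanar (G.comap f) := by
  obtain ⟨pos, arc, hpos, harc, hdisj⟩ := h
  refine ⟨pos ∘ f, fun u v => arc (f u) (f v), hpos.comp hf, fun u v huv => ?_,
    fun u v x y huv hxy hne => hdisj _ _ _ _ huv hxy ?_⟩
  · obtain ⟨hc, h0, h1, hinj, hw⟩ := harc _ _ huv
    exact ⟨hc, h0, h1, hinj, fun w => hw (f w)⟩
  · rwa [← Sym2.map_mk, ← Sym2.map_mk, (Sym2.map.injective hf).ne_iff]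

theorem degN_comap_equiv {V W : Type*} (G : SimpleGraph W) (e : V ≃ W) (v : V) :
    degN (G.comap e) v = degN G (e v) :=
  Nat.card_congr (e.subtypeEquiv fun _ => Iff.rfl)

theorem maxDegIs.comap_equiv {V W : Type*} {G : SimpleGraph W} {Δ : ℕ} (h : maxDegIs G Δ)
    (e : V ≃ W) : maxDegIs (G.comap e) Δ := by
  obtain ⟨hle, w, hw⟩ := h
  refine ⟨fun v => ?_, e.symm w, ?_⟩
  · simpa only [degN_comap_equiv] using hle (e v)
  · rw [degN_comap_equiv, e.apply_symm_apply, hw]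

theorem square_comap_equiv {V W : Type*} (G : SimpleGraph W) (e : V ≃ W) :
    (G.comap e).square = G.square.comap e := by
  ext u v
  simp only [SimpleGraph.square, SimpleGraph.comap_adj, e.injective.ne_iff,
    e.exists_congr_left, e.apply_symm_apply]

theorem chi2_eq_card_of_square_eq_top {V : Type*} [Fintype V] {G : SimpleGraph V}
    (h : G.square = ⊤) : chi2 G = Fintype.card V := by
  rw [chi2, h, SimpleGraph.chromaticNumber_top]

theorem isPlanar_of_openSegment {V : Type*} {G : SimpleGraph V} (pos : V → ℝ × ℝ)
    (hpos : Injective pos)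
    (hvert : ∀ u v w, G.Adj u v → pos w ∉ openSegment ℝ (pos u) (pos v))
    (hdisj : ∀ u v x y, G.Adj u v → G.Adj x y → s(u, v) ≠ s(x, y) →
      Disjoint (openSegment ℝ (pos u) (pos v)) (openSegment ℝ (pos x) (pos y))) :
    IsPlanar G := by
  refine ⟨pos, fun u v => AffineMap.lineMap (pos u) (pos v), hpos, fun u v huv => ?_, ?_⟩
  · refine ⟨AffineMap.lineMap_continuous, AffineMap.lineMap_apply_zero _ _,
      AffineMap.lineMap_apply_one _ _,
      (AffineMap.lineMap_injective ℝ (hpos.ne (G.ne_of_adj huv))).injOn, fun w => ?_⟩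
    rw [← openSegment_eq_image_lineMap]
    exact hvert u v w huv
  · simpa only [← openSegment_eq_image_lineMap] using hdisj

theorem isPlanar_fromRel_of_openSegment {V : Type*} (r : V → V → Prop) (pos : V → ℝ × ℝ)
    (hpos : Injective pos)
    (hvert : ∀ u v w, r u v → pos w ∉ openSegment ℝ (pos u) (pos v))
    (hdisj : ∀ u v x y, r u v → r x y → s(u, v) ≠ s(x, y) →
      Disjoint (openSegment ℝ (pos u) (pos v)) (openSegment ℝ (pos x) (pos y))) :
    IsPlanar (SimpleGraph.fromRel r) := by
  have orient : ∀ {u v}, (SimpleGraph.fromRel r).Adj u v → ∃ u' v', r u' v' ∧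
      s(u, v) = s(u', v') ∧
      openSegment ℝ (pos u) (pos v) = openSegment ℝ (pos u') (pos v') := by
    rintro u v ⟨-, huv | hvu⟩
    · exact ⟨u, v, huv, rfl, rfl⟩
    · exact ⟨v, u, hvu, Sym2.eq_swap, openSegment_symm _ _ _⟩
  refine isPlanar_of_openSegment pos hpos (fun u v w huv => ?_) (fun u v x y huv hxy hne => ?_)
  · obtain ⟨u', v', h, -, hseg⟩ := orient huv
    exact hseg ▸ hvert u' v' w h
  · obtain ⟨u', v', h, hs, hseg⟩ := orient huv
    obtain ⟨x', y', h', hs', hseg'⟩ := orient hxy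
    exact hseg ▸ hseg' ▸ hdisj _ _ _ _ h h' (hs ▸ hs' ▸ hne)

theorem fst_mem_openSegment {p q r : ℝ × ℝ} (hr : r ∈ openSegment ℝ p q) :
    r.1 ∈ openSegment ℝ p.1 q.1 := by
  have himage := image_openSegment ℝ (LinearMap.fst ℝ ℝ ℝ).toAffineMap p q
  simpa using himage.subset ⟨r, hr, rfl⟩

theorem sign_snd_of_mem_openSegment {p q r : ℝ × ℝ} (hp : p.2 = 0)
    (hr : r ∈ openSegment ℝ p q) : SignType.sign r.2 = SignType.sign q.2 := by
  rw [openSegment_eq_image'] at hr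
  obtain ⟨t, ⟨ht0, -⟩, rfl⟩ := hr
  simp [hp, sign_mul, sign_pos ht0]

theorem disjoint_openSegment_of_disjoint_fst {p q p' q' : ℝ × ℝ}
    (h : Disjoint (openSegment ℝ p.1 q.1) (openSegment ℝ p'.1 q'.1)) :
    Disjoint (openSegment ℝ p q) (openSegment ℝ p' q') :=
  Set.disjoint_left.2 fun _ hr hr' =>
    Set.disjoint_left.1 h (fst_mem_openSegment hr) (fst_mem_openSegment hr')

theorem disjoint_openSegment_of_sign_ne {p q p' q' : ℝ × ℝ} (hp : p.2 = 0) (hp' : p'.2 = 0)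
    (h : SignType.sign q.2 ≠ SignType.sign q'.2) :
    Disjoint (openSegment ℝ p q) (openSegment ℝ p' q') :=
  Set.disjoint_left.2 fun _ hr hr' =>
    h ((sign_snd_of_mem_openSegment hp hr).symm.trans (sign_snd_of_mem_openSegment hp' hr'))

theorem disjoint_openSegment_of_fst_eq {p q r : ℝ × ℝ} (hqr : q ≠ r) (h1 : q.1 = r.1)
    (hp : p.1 ≠ q.1) : Disjoint (openSegment ℝ p q) (openSegment ℝ p r) := by
  rw [openSegment_eq_image', openSegment_eq_image', Set.disjoint_left]
  rintro _ ⟨t, ⟨ht0, -⟩, rfl⟩ ⟨s, -, hst⟩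
  simp only [Prod.ext_iff, Prod.smul_fst, Prod.smul_snd, Prod.fst_sub, Prod.snd_sub, smul_eq_mul,
    add_right_inj] at hst
  obtain rfl : s = t := mul_right_cancel₀ (sub_ne_zero.2 hp.symm) (h1 ▸ hst.1)
  exact hqr (Prod.ext h1 (by linarith [mul_left_cancel₀ ht0.ne' hst.2]))

namespace Wegner

inductive Hub | x | y | z
  deriving DecidableEq

instance : Fintype Hub := ⟨{.x, .y, .z}, fun h => by cases h <;> simp⟩

theorem Hub.sum_univ {M : Type*} [AddCommMonoid M] (f : Hub → M) :
    ∑ h, f h = f .x + f .y + f .z := by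
  simp [Finset.univ, Fintype.elems, add_assoc]

/-- The hubs, then the middle vertices of the `m` paths `x - y`, the `m` paths `y - z` and the
`m + 1` paths `x - z`. -/
abbrev Vertex (m : ℕ) := Hub ⊕ (Fin m ⊕ Fin m ⊕ Fin (m + 1))

open Sum

/-- Edges, oriented from their hub end. There is no edge `x - z`: its place is taken by the extra
path, which keeps every hub at degree `2 * m + 2`. -/
def IsEdge {m : ℕ} : Vertex m → Vertex m → Prop
  | inl .x, inl .y | inl .y, inl .z => True
  | inl .x, inr (inl _) | inl .y, inr (inl _) => True
  | inl .y, inr (inr (inl _)) | inl .z, inr (inr (inl _)) => True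
  | inl .x, inr (inr (inr _)) | inl .z, inr (inr (inr _)) => True
  | _, _ => False

@[elab_as_elim]
theorem IsEdge.induction {m : ℕ} {P : Vertex m → Vertex m → Prop} {u v : Vertex m}
    (h : IsEdge u v) (xy : P (inl .x) (inl .y)) (yz : P (inl .y) (inl .z))
    (xa : ∀ i, P (inl .x) (inr (inl i))) (ya : ∀ i, P (inl .y) (inr (inl i)))
    (yb : ∀ i, P (inl .y) (inr (inr (inl i)))) (zb : ∀ i, P (inl .z) (inr (inr (inl i))))
    (xc : ∀ i, P (inl .x) (inr (inr (inr i)))) (zc : ∀ i, P (inl .z) (inr (inr (inr i)))) :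
    P u v := by
  rcases u with (_ | _ | _) | i | i | i <;> rcases v with (_ | _ | _) | j | j | j <;>
    first | exact h.elim | solve_by_elim

def graph (m : ℕ) : SimpleGraph (Vertex m) := SimpleGraph.fromRel IsEdge

theorem card_vertex (m : ℕ) : Fintype.card (Vertex m) = 3 * m + 4 := by
  simp only [Fintype.card_sum, Fintype.card_fin, show Fintype.card Hub = 3 from rfl]
  ring

theorem degN_graph_eq_sum (m : ℕ) (v : Vertex m) [DecidablePred ((graph m).Adj v)] :
    degN (graph m) v = ∑ u, if (graph m).Adj v u then 1 else 0 := by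
  rw [degN, Nat.card_eq_fintype_card, Fintype.card_subtype, Finset.card_filter]

theorem degN_graph_inl (m : ℕ) (h : Hub) : degN (graph m) (inl h) = 2 * m + 2 := by
  classical
  cases h <;>
  · rw [degN_graph_eq_sum]
    simp only [Fintype.sum_sum_type, Hub.sum_univ]
    simp [graph, IsEdge]
    ring

theorem degN_graph_inr (m : ℕ) (p : Fin m ⊕ Fin m ⊕ Fin (m + 1)) :
    degN (graph m) (inr p) = 2 := by
  classical
  rcases p with i | i | i <;>
  · rw [degN_graph_eq_sum]
    simp only [Fintype.sum_sum_type, Hub.sum_univ]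
    simp [graph, IsEdge]

theorem maxDegIs_graph (m : ℕ) : maxDegIs (graph m) (2 * m + 2) := by
  refine ⟨?_, inl .x, degN_graph_inl m _⟩
  rintro (h | p)
  · exact (degN_graph_inl m h).le
  · rw [degN_graph_inr]
    omega

theorem square_graph (m : ℕ) : (graph m).square = ⊤ := by
  ext u v
  refine ⟨fun h => h.1, fun huv => ⟨huv, ?_⟩⟩
  simp only [graph, SimpleGraph.fromRel_adj]
  rcases u with (_ | _ | _) | i | i | i <;> rcases v with (_ | _ | _) | j | j | j <;>
    solve
    | exact absurd rfl huv
    | refine Or.inl ⟨huv, ?_⟩; simp [IsEdge]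
    | refine Or.inr ⟨inl .x, ?_, ?_⟩ <;> simp [IsEdge]
    | refine Or.inr ⟨inl .y, ?_, ?_⟩ <;> simp [IsEdge]
    | refine Or.inr ⟨inl .z, ?_, ?_⟩ <;> simp [IsEdge]

noncomputable def pos {m : ℕ} : Vertex m → ℝ × ℝ
  | inl .x => (0, 0)
  | inl .y => (2, 0)
  | inl .z => (4, 0)
  | inr (inl i) => (1, -(i + 1))
  | inr (inr (inl i)) => (3, -(i + 1))
  | inr (inr (inr i)) => (2, i + 1)

def side {m : ℕ} : Vertex m → SignType
  | inl _ => 0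
  | inr (inl _) | inr (inr (inl _)) => -1
  | inr (inr (inr _)) => 1

theorem sign_pos_snd {m : ℕ} : ∀ v : Vertex m, SignType.sign (pos v).2 = side v
  | inl .x | inl .y | inl .z => sign_zero
  | inr (inl _) | inr (inr (inl _)) =>
    sign_neg (by simp only [pos]; exact neg_neg_of_pos (by positivity))
  | inr (inr (inr _)) => sign_pos (by simp only [pos]; positivity)

theorem pos_injective (m : ℕ) : Injective (pos (m := m)) := by
  rintro ((_ | _ | _) | i | i | i) ((_ | _ | _) | j | j | j) h <;>
    simp [pos, Prod.ext_iff] at h ⊢ <;> first | linarith | omega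

/-- Every edge starts at a hub on the horizontal axis, so its interior lies strictly between the
abscissae of its ends and on the same side of the axis as its other end. This separates edges of
different kinds; the edges of one kind form a fan from one hub to points of one vertical line. -/
theorem isPlanar_graph (m : ℕ) : IsPlanar (graph m) := by
  refine isPlanar_fromRel_of_openSegment _ pos (pos_injective m) ?_ ?_
  · intro u v w huv
    refine IsEdge.induction huv ?_ ?_ (fun i => ?_) (fun i => ?_) (fun i => ?_) (fun i => ?_)
      (fun i => ?_) (fun i => ?_) <;> intro hw <;>
      have hfst := fst_mem_openSegment hw <;>
      have hsign := sign_snd_of_mem_openSegment rfl hw <;>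
      rw [sign_pos_snd, sign_pos_snd] at hsign <;>
      rcases w with (_ | _ | _) | j | j | j <;>
      solve
      | simp [side] at hsign
      | norm_num [pos, openSegment_eq_Ioo'] at hfst
  · intro u v u' v' huv huv'
    refine IsEdge.induction huv ?_ ?_ (fun i => ?_) (fun i => ?_) (fun i => ?_) (fun i => ?_)
      (fun i => ?_) (fun i => ?_) <;>
      refine IsEdge.induction huv' ?_ ?_ (fun j => ?_) (fun j => ?_) (fun j => ?_)
        (fun j => ?_) (fun j => ?_) (fun j => ?_) <;> intro hne <;>
      solve
      | exact absurd rfl hne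
      | refine disjoint_openSegment_of_fst_eq ((pos_injective m).ne ?_) rfl ?_ <;> simp_all [pos]
      | refine disjoint_openSegment_of_sign_ne rfl rfl ?_; simp [sign_pos_snd, side]
      | refine disjoint_openSegment_of_disjoint_fst ?_; norm_num [pos, openSegment_eq_Ioo']

end Wegner

/-- For every even `Δ ≥ 2`, there exists a planar graph `G` with maximum degree `Δ`
such that `χ₂(G) ≥ 3Δ/2 + 1`. -/
theorem stmt5 (Δ : ℕ) (heven : Even Δ) (hΔ : 2 ≤ Δ) :
    ∃ (n : ℕ) (G : SimpleGraph (Fin n)), IsPlanar G ∧ maxDegIs G Δ ∧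
      ((3 * Δ / 2 + 1 : ℕ) : ℕ∞) ≤ chi2 G := by
  obtain ⟨m, rfl⟩ : ∃ m, Δ = 2 * m + 2 := by
    obtain ⟨k, rfl⟩ := heven
    exact ⟨k - 1, by omega⟩
  let e := (Fintype.equivFin (Wegner.Vertex m)).symm
  have hsquare : ((Wegner.graph m).comap e).square = ⊤ := by
    rw [square_comap_equiv, Wegner.square_graph]
    ext
    simp [e.injective.ne_iff]
  refine ⟨_, (Wegner.graph m).comap e, (Wegner.isPlanar_graph m).comap e.injective,
    (Wegner.maxDegIs_graph m).comap_equiv e, ?_⟩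
  rw [chi2_eq_card_of_square_eq_top hsquare, Fintype.card_fin, Wegner.card_vertex]
  norm_cast
  omega
end

section
/- Let G be a graph with maximum degree Δ and let v be a vertex of G such that in G − v every pair of neighbors of v is at distance at most 2, and v has at most 2Δ + 6 vertices at distance at most 2 in G. If G − v admits a proper coloring of its square with 2Δ + 7 colors, then G admits a proper coloring of its square with 2Δ + 7 colors. -/
open SimpleGraph

/-! Deleting `v` only destroys the distance-2 paths through `v`, i.e. those between two
neighbours of `v`; the hypothesis on such pairs therefore makes a square-coloring of `G − v` a
proper coloring of the square of `G` restricted to `V − v`. Since at most `2Δ + 6` vertices lie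
within distance 2 of `v`, one of the `2Δ + 7` colors is free for `v`. For this count to mean
anything that neighbourhood must be finite (`Nat.card` of an infinite type is `0`); it is, because
it is covered by finitely many cliques of the square, each colored injectively. -/

namespace SimpleGraph

variable {V : Type*}

theorem isClique_square_neighborSet (G : SimpleGraph V) (w : V) :
    G.square.IsClique (G.neighborSet w) :=
  fun _ hx _ hy hxy => ⟨hxy, Or.inr ⟨w, hx.symm, hy⟩⟩

theorem neighborSet_square_subset (G : SimpleGraph V) (v : V) :
    G.square.neighborSet v ⊆ G.neighborSet v ∪ ⋃ w ∈ G.neighborSet v, G.neighborSet w \ {v} := by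
  rintro u ⟨hvu, huv | ⟨w, hvw, hwu⟩⟩
  · exact Or.inl huv
  · exact Or.inr (Set.mem_biUnion hvw ⟨hwu, hvu.symm⟩)

theorem finite_neighborSet_square (G : SimpleGraph V) (v : V)
    (hclique : ∀ s : Set V, G.square.IsClique s → v ∉ s → s.Finite) :
    (G.square.neighborSet v).Finite := by
  have hN := hclique _ (G.isClique_square_neighborSet v) G.notMem_neighborSet_self
  refine (hN.union (hN.biUnion fun w _ => ?_)).subset (G.neighborSet_square_subset v)
  exact hclique _ ((G.isClique_square_neighborSet w).subset Set.sdiff_subset) fun h => h.2 rfl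

theorem square_induce_le_induce_square (G : SimpleGraph V) (v : V)
    (hnbr : ∀ x y : {u // u ≠ v}, G.Adj v x.1 → G.Adj v y.1 → x ≠ y →
      (G.induce {u | u ≠ v}).square.Adj x y) :
    G.square.induce {u | u ≠ v} ≤ (G.induce {u | u ≠ v}).square := by
  rintro x y ⟨hxy, hadj | ⟨w, hxw, hwy⟩⟩
  · exact ⟨Subtype.coe_ne_coe.mp hxy, Or.inl hadj⟩
  · by_cases hw : w = v
    · subst hw
      exact hnbr x y hxw.symm hwy (Subtype.coe_ne_coe.mp hxy)
    · exact ⟨Subtype.coe_ne_coe.mp hxy, Or.inr ⟨⟨w, hw⟩, hxw, hwy⟩⟩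

section ExtendColoring

variable {K : SimpleGraph V} {v : V} {n : ℕ}

theorem Colorable.finite_of_isClique_of_notMem (hK : (K.induce {u | u ≠ v}).Colorable n)
    {s : Set V} (hs : K.IsClique s) (hv : v ∉ s) : s.Finite := by
  obtain ⟨c⟩ := hK
  have hne (x : s) : x.1 ≠ v := fun h => hv (h ▸ x.2)
  refine Set.finite_coe_iff.mp (Finite.of_injective (fun x : s => c ⟨x, hne x⟩) ?_)
  intro x y hxy
  by_contra h
  exact c.valid (v := ⟨x, hne x⟩) (w := ⟨y, hne y⟩) (hs x.2 y.2 (Subtype.coe_ne_coe.mpr h)) hxy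

theorem Colorable.of_induce_ne (hK : (K.induce {u | u ≠ v}).Colorable n)
    (hfin : (K.neighborSet v).Finite) (hcard : Nat.card (K.neighborSet v) < n) :
    K.Colorable n := by
  classical
  obtain ⟨c⟩ := hK
  have hne (u : K.neighborSet v) : u.1 ≠ v := (K.ne_of_adj u.2).symm
  have : Finite (K.neighborSet v) := hfin
  obtain ⟨a, hfree⟩ : ∃ a, ∀ u : K.neighborSet v, c ⟨u, hne u⟩ ≠ a := by
    by_contra! h
    have := Nat.card_le_card_of_surjective _ h
    rw [Nat.card_eq_fintype_card, Fintype.card_fin] at this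
    omega
  refine ⟨Coloring.mk (fun u => if h : u = v then a else c ⟨u, h⟩) ?_⟩
  intro x y hxy
  by_cases hx : x = v <;> by_cases hy : y = v
  · exact absurd (hx.trans hy.symm) (K.ne_of_adj hxy)
  · subst hx
    simpa [hy] using (hfree ⟨y, hxy⟩).symm
  · subst hy
    simpa [hx] using hfree ⟨x, hxy.symm⟩
  · simpa [hx, hy] using c.valid (v := ⟨x, hx⟩) (w := ⟨y, hy⟩) hxy

end ExtendColoring

end SimpleGraph

theorem stmt7_general {V : Type*} (G : SimpleGraph V) (Δ : ℕ) (v : V)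
    (hnbr : ∀ x y : {u // u ≠ v}, G.Adj v x.1 → G.Adj v y.1 → x ≠ y →
      (G.induce {u | u ≠ v}).square.Adj x y)
    (hfew : Nat.card {u // u ≠ v ∧ (G.Adj v u ∨ ∃ w, G.Adj v w ∧ G.Adj w u)} ≤ 2 * Δ + 6)
    (hcol : (G.induce {u | u ≠ v}).square.Colorable (2 * Δ + 7)) :
    G.square.Colorable (2 * Δ + 7) := by
  have hK : (G.square.induce {u | u ≠ v}).Colorable (2 * Δ + 7) :=
    hcol.mono_left (G.square_induce_le_induce_square v hnbr)
  have hfin := G.finite_neighborSet_square v fun _ ↦ hK.finite_of_isClique_of_notMem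
  have hcard : Nat.card (G.square.neighborSet v) ≤ 2 * Δ + 6 :=
    (Nat.card_congr (Equiv.subtypeEquivRight fun _ => and_congr_left' ne_comm)).trans_le hfew
  exact hK.of_induce_ne hfin (Nat.lt_succ_of_le hcard)

/-- Let `v` be a vertex of `G` (of maximum degree `Δ`) such that in `G − v` every pair
of neighbors of `v` is at distance at most 2, and `v` has at most `2Δ + 6` vertices at
distance at most 2 in `G`. If `G − v` admits a proper coloring of its square with
`2Δ + 7` colors, then so does `G`. -/
theorem stmt7 {V : Type*} (G : SimpleGraph V) (Δ : ℕ) (hdeg : maxDegIs G Δ) (v : V)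
    (hnbr : ∀ x y : {u // u ≠ v}, G.Adj v x.1 → G.Adj v y.1 → x ≠ y →
      (G.induce {u | u ≠ v}).square.Adj x y)
    (hfew : Nat.card {u // u ≠ v ∧ (G.Adj v u ∨ ∃ w, G.Adj v w ∧ G.Adj w u)} ≤ 2 * Δ + 6)
    (hcol : (G.induce {u | u ≠ v}).square.Colorable (2 * Δ + 7)) :
    G.square.Colorable (2 * Δ + 7) :=
  stmt7_general G Δ v hnbr hfew hcol
end

section
/- Let G be a graph with maximum degree Δ ≥ 3 containing a vertex v of degree 2 with neighbors u and w. If the planar graph G' = (G − v) + uw satisfies χ₂(G') ≤ 2Δ + 7, then χ₂(G) ≤ 2Δ + 7. -/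
open SimpleGraph

/-!
A square-coloring of `G' = (G - v) + uw` is a square-coloring of `G` away from `v`: the only
pair at distance 2 through `v` is `u, w`, which is an edge of `G'`. The colors forbidden at `v`
are those of `u`, `w` and of the other neighbors of `u` and `w`, at most `2Δ + 2 < 2Δ + 7` of
them, so `v` can be colored greedily. Since `degN` is a `Nat.card`, which is `0` on infinite
neighborhoods, the count uses that the neighbors of a vertex are pairwise adjacent in the
square and so get distinct colors.
-/

namespace SimpleGraph

variable {V : Type*} {G : SimpleGraph V}

theorem square_adj_of_adj_of_adj {x y z : V} (hxz : G.Adj x z) (hzy : G.Adj z y)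
    (hxy : x ≠ y) : G.square.Adj x y :=
  ⟨hxy, Or.inr ⟨z, hxz, hzy⟩⟩

theorem neighborSet_eq_pair_of_degN_eq_two {v u w : V} (hv : degN G v = 2)
    (hvu : G.Adj v u) (hvw : G.Adj v w) (huw : u ≠ w) : G.neighborSet v = {u, w} := by
  have hcard : (G.neighborSet v).ncard = 2 := (Nat.card_coe_set_eq _).symm.trans hv
  refine (Set.eq_of_subset_of_ncard_le ?_ ?_ ?_).symm
  · exact Set.insert_subset hvu (Set.singleton_subset_iff.mpr hvw)
  · rw [hcard, Set.ncard_pair huw]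
  · exact Set.finite_of_ncard_ne_zero (by omega)

theorem square_adj_induce_sup_fromEdgeSet {v u w : V} (hN : G.neighborSet v = {u, w})
    (hu : u ≠ v) (hw : w ≠ v) {x y : V} (hx : x ≠ v) (hy : y ≠ v) (hxy : G.square.Adj x y) :
    ((G.induce {x | x ≠ v}) ⊔ fromEdgeSet {s(⟨u, hu⟩, ⟨w, hw⟩)}).square.Adj
      ⟨x, hx⟩ ⟨y, hy⟩ := by
  obtain ⟨hne, hxy | ⟨z, hxz, hzy⟩⟩ := hxy
  · exact ⟨by simpa using hne, Or.inl (Or.inl hxy)⟩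
  by_cases hz : z = v
  · subst hz
    have hx' : x ∈ ({u, w} : Set V) := hN ▸ hxz.symm
    have hy' : y ∈ ({u, w} : Set V) := hN ▸ hzy
    refine ⟨by simpa using hne, Or.inl (Or.inr ⟨?_, by simpa using hne⟩)⟩
    rcases hx' with rfl | rfl <;> rcases hy' with rfl | rfl <;> simp_all [Sym2.eq_swap]
  · exact square_adj_of_adj_of_adj (z := ⟨z, hz⟩) (Or.inl hxz) (Or.inl hzy) (by simpa using hne)

theorem square_neighborSet_subset {v u w : V} (hN : G.neighborSet v = {u, w}) :
    G.square.neighborSet v ⊆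
      {u, w} ∪ (G.neighborSet u \ {v}) ∪ (G.neighborSet w \ {v}) := by
  rintro x ⟨hne, hvx | ⟨z, hvz, hzx⟩⟩
  · exact Or.inl (Or.inl (hN ▸ hvx))
  · have hxv : x ∉ ({v} : Set V) := fun h => hne (h ▸ rfl)
    rcases (hN ▸ hvz : z ∈ ({u, w} : Set V)) with rfl | rfl
    · exact Or.inl (Or.inr ⟨hzx, hxv⟩)
    · exact Or.inr ⟨hzx, hxv⟩

section ColoringAwayFrom

variable {α : Type*} {v : V} {f : V → α}
  (hf : ∀ x y, x ≠ v → y ≠ v → G.square.Adj x y → f x ≠ f y)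
include hf

theorem ncard_image_neighborSet_sdiff_le_degN (x : V) :
    (f '' (G.neighborSet x \ {v})).ncard ≤ degN G x := by
  have hinj : Set.InjOn f (G.neighborSet x \ {v}) := by
    intro y ⟨hxy, hyv⟩ z ⟨hxz, hzv⟩ hfyz
    by_contra hyz
    exact hf y z hyv hzv (square_adj_of_adj_of_adj hxy.symm hxz hyz) hfyz
  rw [hinj.ncard_image]
  exact (Set.ncard_sdiff_singleton_le _ _).trans (Nat.card_coe_set_eq _).ge

theorem ncard_image_square_neighborSet_le [Finite α] {u w : V}
    (hN : G.neighborSet v = {u, w}) :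
    (f '' G.square.neighborSet v).ncard ≤ 2 + degN G u + degN G w := by
  calc (f '' G.square.neighborSet v).ncard
      ≤ (f '' {u, w} ∪ f '' (G.neighborSet u \ {v}) ∪ f '' (G.neighborSet w \ {v})).ncard := by
        rw [← Set.image_union, ← Set.image_union]
        exact Set.ncard_le_ncard (Set.image_mono (square_neighborSet_subset hN))
    _ ≤ (f '' {u, w}).ncard + (f '' (G.neighborSet u \ {v})).ncard
          + (f '' (G.neighborSet w \ {v})).ncard :=
        (Set.ncard_union_le _ _).trans (Nat.add_le_add_right (Set.ncard_union_le _ _) _)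
    _ ≤ 2 + degN G u + degN G w := by
        gcongr
        · rw [Set.image_pair]
          exact (Set.ncard_insert_le _ _).trans (by rw [Set.ncard_singleton])
        · exact ncard_image_neighborSet_sdiff_le_degN hf u
        · exact ncard_image_neighborSet_sdiff_le_degN hf w

end ColoringAwayFrom

theorem colorable_of_ncard_image_neighborSet_lt {H : SimpleGraph V} {n : ℕ} (v : V)
    (f : V → Fin n) (hf : ∀ x y, x ≠ v → y ≠ v → H.Adj x y → f x ≠ f y)
    (hv : (f '' H.neighborSet v).ncard < n) : H.Colorable n := by
  classical
  obtain ⟨c, hc⟩ := (Set.ne_univ_iff_exists_notMem (f '' H.neighborSet v)).mp fun h => by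
    rw [h, Set.ncard_univ, Nat.card_fin] at hv
    exact lt_irrefl _ hv
  refine ⟨Coloring.mk (Function.update f v c) fun {x y} hxy => ?_⟩
  by_cases hx : x = v <;> by_cases hy : y = v
  · exact absurd (hx.trans hy.symm) hxy.ne
  · subst hx
    simpa [hy] using fun h => hc ⟨y, hxy, h.symm⟩
  · subst hy
    simpa [hx] using fun h => hc ⟨x, hxy.symm, h⟩
  · simpa [hx, hy] using hf x y hx hy hxy

end SimpleGraph

theorem stmt8_general {V : Type*} (G : SimpleGraph V) (Δ : ℕ)
    (hdeg : maxDegIs G Δ) (v u w : V) (hv : degN G v = 2) (huw : u ≠ w)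
    (hvu : G.Adj v u) (hvw : G.Adj v w)
    (G' : SimpleGraph {x : V // x ≠ v})
    (hG' : G' = (G.induce {x | x ≠ v}) ⊔
      SimpleGraph.fromEdgeSet {s(⟨u, hvu.ne'⟩, ⟨w, hvw.ne'⟩)})
    (hcol : chi2 G' ≤ ((2 * Δ + 7 : ℕ) : ℕ∞)) :
    chi2 G ≤ ((2 * Δ + 7 : ℕ) : ℕ∞) := by
  have hN := neighborSet_eq_pair_of_degN_eq_two hv hvu hvw huw
  rw [chi2, chromaticNumber_le_iff_colorable] at hcol ⊢
  obtain ⟨C⟩ := hcol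
  subst hG'
  classical
  let f : V → Fin (2 * Δ + 7) := fun x => if h : x = v then 0 else C ⟨x, h⟩
  have hf : ∀ x y, x ≠ v → y ≠ v → G.square.Adj x y → f x ≠ f y := fun x y hx hy hxy => by
    simpa [f, hx, hy] using C.valid (square_adj_induce_sup_fromEdgeSet hN _ _ hx hy hxy)
  refine colorable_of_ncard_image_neighborSet_lt v f hf ?_
  have hforbidden := ncard_image_square_neighborSet_le hf hN
  have hdu := hdeg.1 u
  have hdw := hdeg.1 w
  omega

/-- Let `G` have maximum degree `Δ ≥ 3` and contain a vertex `v` of degree 2 with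
neighbors `u` and `w`. If the planar graph `G' = (G − v) + uw` satisfies
`χ₂(G') ≤ 2Δ + 7`, then `χ₂(G) ≤ 2Δ + 7`. -/
theorem stmt8 {V : Type*} (G : SimpleGraph V) (Δ : ℕ) (hΔ : 3 ≤ Δ)
    (hdeg : maxDegIs G Δ) (v u w : V) (hv : degN G v = 2) (huw : u ≠ w)
    (hvu : G.Adj v u) (hvw : G.Adj v w)
    (G' : SimpleGraph {x : V // x ≠ v})
    (hG' : G' = (G.induce {x | x ≠ v}) ⊔
      SimpleGraph.fromEdgeSet {s(⟨u, hvu.ne'⟩, ⟨w, hvw.ne'⟩)})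
    (hplanar : IsPlanar G') (hcol : chi2 G' ≤ ((2 * Δ + 7 : ℕ) : ℕ∞)) :
    chi2 G ≤ ((2 * Δ + 7 : ℕ) : ℕ∞) :=
  stmt8_general G Δ hdeg v u w hv huw hvu hvw G' hG' hcol
end

section
/- Let G be a minimal counterexample (with respect to the order comparing first by fewer vertices, then by more edges) among planar graphs of maximum degree Δ ≥ 9 with χ₂(G) > 2Δ + 7. Then G contains no edge uv such that G − {u, v} is disconnected. -/
/-!
Suppose that `G - {u, v}` falls apart, and let `A` be a union of some of its components. The
graphs `G[A ∪ {u, v}]` and `G[V ∖ A]` are smaller planar graphs of maximum degree at most `Δ`,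
so by minimality their squares are `(2Δ + 7)`-colourable, and since `u ~ v` these colourings are
proper for the square of `G` on each side. Vertices on opposite sides are at distance at most two
only through `u` or `v`, so every conflict involves the at most `2Δ - 2` other neighbours of `u`
and `v`. With `2Δ` colours we can therefore permute the colours of the second side so that they
agree with the first side on `u` and `v` and avoid, on the neighbours of `u, v`, the colours used
by those on the first side; gluing gives a colouring of the square of `G` with `2Δ + 7` colours.
-/

open SimpleGraph

/-- `G` is a minimal counterexample (fewest vertices, then most edges) among planar
graphs of maximum degree at most `Δ` to the bound `χ₂ ≤ 2Δ + 7`. -/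
def MinimalCex (Δ : ℕ) {V : Type*} [Fintype V] (G : SimpleGraph V) : Prop :=
  IsPlanar G ∧ maxDegIs G Δ ∧ ((2 * Δ + 7 : ℕ) : ℕ∞) < chi2 G ∧
  ∀ (n : ℕ) (H : SimpleGraph (Fin n)), IsPlanar H →
    (∀ v, degN H v ≤ Δ) →
    (n < Fintype.card V ∨
      (n = Fintype.card V ∧ Nat.card G.edgeSet < Nat.card H.edgeSet)) →
    chi2 H ≤ ((2 * Δ + 7 : ℕ) : ℕ∞)


open Finset

section

variable {V W : Type*} {G : SimpleGraph V} {H : SimpleGraph W}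

theorem IsPlanar.of_embedding (f : G ↪g H) (h : IsPlanar H) : IsPlanar G := by
  obtain ⟨pos, arc, hpos, harc, hdisj⟩ := h
  refine ⟨pos ∘ f, fun x y => arc (f x) (f y), hpos.comp f.injective,
    fun x y hxy => ?_, fun x y z w hxy hzw hne => hdisj _ _ _ _ (f.map_adj_iff.2 hxy)
      (f.map_adj_iff.2 hzw) fun heq => hne ?_⟩
  · obtain ⟨hcont, h0, h1, hinj, havoid⟩ := harc _ _ (f.map_adj_iff.2 hxy)
    exact ⟨hcont, h0, h1, hinj, fun w => havoid (f w)⟩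
  · simpa only [← Sym2.map_mk, (Sym2.map.injective f.injective).eq_iff] using heq

theorem degN_le_of_embedding [Finite W] (f : G ↪g H) (x : V) : degN G x ≤ degN H (f x) :=
  Nat.card_le_card_of_injective (fun y => ⟨f y, f.map_adj_iff.2 y.2⟩)
    fun _ _ h => Subtype.ext (f.injective (congrArg Subtype.val h))

theorem degN_eq_degree (x : V) [Fintype (G.neighborSet x)] : degN G x = G.degree x := by
  change Nat.card (G.neighborSet x) = _
  rw [Nat.card_eq_fintype_card, card_neighborSet_eq_degree]

def SimpleGraph.Embedding.squareHom (f : G ↪g H) : G.square →g H.square where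
  toFun := f
  map_rel' := fun ⟨hne, h⟩ => ⟨f.injective.ne hne, h.imp f.map_adj_iff.2
    fun ⟨w, hxw, hwy⟩ => ⟨f w, f.map_adj_iff.2 hxw, f.map_adj_iff.2 hwy⟩⟩

end

theorem Equiv.Perm.exists_extending_pair_forall_notMem {ι α : Type*} [Fintype ι] [Fintype α]
    [DecidableEq α] {f g : ι → α} (hf : Function.Injective f) (hg : Function.Injective g)
    {X Y : Finset α} (hfY : ∀ i, f i ∉ Y)
    (hcard : Fintype.card ι + #X + #Y ≤ Fintype.card α) :
    ∃ σ : Perm α, (∀ i, σ (f i) = g i) ∧ ∀ y ∈ Y, σ y ∉ X := by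
  induction Y using Finset.induction_on with
  | empty =>
    obtain ⟨σ, hσ⟩ := exists_extending_pair f g hf hg
    exact ⟨σ, hσ, by simp⟩
  | insert y Y hyY ih =>
    obtain ⟨σ, hσfg, hσX⟩ := ih (fun i h => hfY i (mem_insert_of_mem h))
      (by rw [card_insert_of_notMem hyY] at hcard; omega)
    -- Swapping `σ y` with a value `z` unused by `X` and by `σ` on the earlier points repairs `y`
    -- without disturbing them.
    obtain ⟨z, -, hz⟩ : ∃ z ∈ univ, z ∉ X ∪ (univ.image f ∪ Y).image σ := by
      refine exists_mem_notMem_of_card_lt_card ?_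
      have h₁ := card_union_le X ((univ.image f ∪ Y).image σ)
      have h₂ := (card_image_le (s := univ.image f ∪ Y) (f := σ)).trans (card_union_le _ _)
      have h₃ := card_image_le (s := univ) (f := f)
      rw [card_univ, card_insert_of_notMem hyY] at *
      omega
    have hfix : ∀ a ∈ univ.image f ∪ Y, swap (σ y) z (σ a) = σ a := by
      intro a ha
      refine swap_apply_of_ne_of_ne (σ.injective.ne ?_) fun h => hz ?_
      · rintro rfl
        rcases mem_union.1 ha with h | h
        · obtain ⟨i, -, rfl⟩ := mem_image.1 h
          exact hfY i (mem_insert_self _ _)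
        · exact hyY h
      · exact h ▸ mem_union_right _ (mem_image_of_mem σ ha)
    refine ⟨swap (σ y) z * σ, fun i => ?_, ?_⟩
    · rw [mul_apply, hfix _ (mem_union_left _ (mem_image_of_mem f (mem_univ i))), hσfg]
    · intro a ha
      rcases mem_insert.1 ha with rfl | ha
      · rw [mul_apply, swap_apply_left]
        exact fun h => hz (mem_union_left _ h)
      · rw [mul_apply, hfix a (mem_union_right _ ha)]
        exact hσX a ha

namespace SimpleGraph

variable {V α : Type*} {G H : SimpleGraph V}

theorem square_adj_of_adj_or_adj {u v y : V} (huv : G.Adj u v) (hy : G.Adj u y ∨ G.Adj v y)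
    (hyu : y ≠ u) : G.square.Adj y u :=
  ⟨hyu, hy.imp Adj.symm fun hvy => ⟨v, hvy.symm, huv.symm⟩⟩

theorem square_induce_le_induce_square_s9 {s : Set V} {u v : V} (huv : G.Adj u v)
    (hs : ∀ x ∈ s, ∀ w ∉ s, G.Adj x w → x = u ∨ x = v) :
    G.square.induce s ≤ (G.induce s).square := by
  rintro x y ⟨hne, hxy | ⟨w, hxw, hwy⟩⟩
  · exact ⟨fun h => hne (congrArg Subtype.val h), Or.inl hxy⟩
  refine ⟨fun h => hne (congrArg Subtype.val h), ?_⟩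
  by_cases hw : w ∈ s
  · exact Or.inr ⟨⟨w, hw⟩, hxw, hwy⟩
  left
  rcases hs x x.2 w hw hxw with hx | hx <;> rcases hs y y.2 w hw hwy.symm with hy | hy <;>
    simp only [comap_adj, Function.Embedding.subtype_apply, hx, hy] at hne ⊢
  exacts [absurd rfl hne, huv, huv.symm, absurd rfl hne]

theorem Coloring.exists_extend [Nonempty α] {s : Set V} (c : (H.induce s).Coloring α) :
    ∃ c' : V → α, ∀ x ∈ s, ∀ y ∈ s, H.Adj x y → c' x ≠ c' y := by
  classical
  refine ⟨fun x => if hx : x ∈ s then c ⟨x, hx⟩ else Classical.arbitrary α,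
    fun x hx y hy hxy => ?_⟩
  simp only [dif_pos hx, dif_pos hy]
  exact c.valid (show (H.induce s).Adj ⟨x, hx⟩ ⟨y, hy⟩ from hxy)

theorem piecewise_ne_of_adj {A I : Set V} [DecidablePred (· ∈ A)] {c₁ c₂ : V → α}
    (h₁ : ∀ x ∈ A ∪ I, ∀ y ∈ A ∪ I, H.Adj x y → c₁ x ≠ c₁ y)
    (h₂ : ∀ x ∉ A, ∀ y ∉ A, H.Adj x y → c₂ x ≠ c₂ y)
    (hI : ∀ x ∈ I, c₁ x = c₂ x)
    (hcross : ∀ x ∈ A, ∀ y ∉ A ∪ I, H.Adj x y → c₁ x ≠ c₂ y) {x y : V} (hxy : H.Adj x y) :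
    A.piecewise c₁ c₂ x ≠ A.piecewise c₁ c₂ y := by
  have key : ∀ x ∈ A, ∀ y ∉ A, H.Adj x y → c₁ x ≠ c₂ y := by
    intro x hx y hy hxy
    by_cases hyI : y ∈ I
    · rw [← hI y hyI]
      exact h₁ x (Or.inl hx) y (Or.inr hyI) hxy
    · exact hcross x hx y (by simp [hy, hyI]) hxy
  by_cases hx : x ∈ A <;> by_cases hy : y ∈ A <;>
    simp only [Set.piecewise_eq_of_mem, Set.piecewise_eq_of_notMem, hx, hy, not_false_eq_true]
  · exact h₁ x (Or.inl hx) y (Or.inl hy) hxy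
  · exact key x hx y hy hxy
  · exact (key y hy x hx hxy.symm).symm
  · exact h₂ x hx y hy hxy

theorem adj_or_adj_of_square_adj {u v x y : V} {A : Set V}
    (hA : ∀ x ∈ A, ∀ y ∉ A, G.Adj x y → y = u ∨ y = v) (hx : x ∈ A) (hy : y ∉ A)
    (hyu : y ≠ u) (hyv : y ≠ v) (hxy : G.square.Adj x y) :
    (G.Adj u x ∨ G.Adj v x) ∧ (G.Adj u y ∨ G.Adj v y) := by
  obtain ⟨-, hxy | ⟨w, hxw, hwy⟩⟩ := hxy
  · exact absurd (hA x hx y hy hxy) (by tauto)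
  have hw : w ∉ A := fun hw => absurd (hA w hw y hy hwy) (by tauto)
  rcases hA x hx w hw hxw with rfl | rfl
  · exact ⟨Or.inl hxw.symm, Or.inl hwy⟩
  · exact ⟨Or.inr hxw.symm, Or.inr hwy⟩

theorem exists_separation_of_not_preconnected {S : Set V} (h : ¬ (G.induce S).Preconnected) :
    ∃ A ⊆ S, A.Nonempty ∧ (∃ b ∈ S, b ∉ A) ∧ ∀ x ∈ A, ∀ y ∈ S, G.Adj x y → y ∈ A := by
  obtain ⟨a, b, hab⟩ : ∃ a b : S, ¬ (G.induce S).Reachable a b := by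
    simpa [Preconnected] using h
  refine ⟨{x | ∃ hx : x ∈ S, (G.induce S).Reachable a ⟨x, hx⟩}, fun x hx => hx.1,
    ⟨a, a.2, .refl _⟩, ⟨b, b.2, fun ⟨_, hr⟩ => hab hr⟩, ?_⟩
  rintro x ⟨hx, hr⟩ y hy hxy
  exact ⟨hy, hr.trans (Adj.reachable (show (G.induce S).Adj ⟨x, hx⟩ ⟨y, hy⟩ from hxy))⟩

theorem card_neighborFinset_union_sdiff_pair_add_two_le [Fintype V] [DecidableRel G.Adj]
    [DecidableEq V] {Δ : ℕ} (hΔ : ∀ x, G.degree x ≤ Δ) {u v : V} (huv : G.Adj u v) :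
    #((G.neighborFinset u ∪ G.neighborFinset v) \ {u, v}) + 2 ≤ 2 * Δ := by
  have hsub : ({u, v} : Finset V) ⊆ G.neighborFinset u ∪ G.neighborFinset v := by
    simp [insert_subset_iff, huv, huv.symm]
  have hunion := card_union_le (G.neighborFinset u) (G.neighborFinset v)
  have hpair := card_le_card hsub
  rw [card_sdiff_of_subset hsub, card_pair huv.ne] at *
  rw [card_neighborFinset_eq_degree, card_neighborFinset_eq_degree] at hunion
  have := hΔ u
  have := hΔ v
  omega

theorem colorable_square_of_separation [Fintype V] [DecidableRel G.Adj] {Δ n : ℕ}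
    (hΔ : ∀ x, G.degree x ≤ Δ) (hn : 2 * Δ ≤ n) {u v : V} (huv : G.Adj u v) {A : Set V}
    (hu : u ∉ A) (hv : v ∉ A) (hA : ∀ x ∈ A, ∀ y ∉ A, G.Adj x y → y = u ∨ y = v)
    (h₁ : (G.induce (A ∪ {u, v})).square.Colorable n) (h₂ : (G.induce Aᶜ).square.Colorable n) :
    G.square.Colorable n := by
  classical
  obtain ⟨c₁⟩ := h₁
  obtain ⟨c₂⟩ := h₂
  have : Nonempty (Fin n) := ⟨c₁ ⟨u, by simp⟩⟩
  have hV₁ : ∀ x ∈ A ∪ {u, v}, ∀ w ∉ A ∪ {u, v}, G.Adj x w → x = u ∨ x = v :=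
    fun x hx w hw hxw =>
      hx.resolve_left fun hxA => hw (Or.inr (hA x hxA w (fun h => hw (Or.inl h)) hxw))
  have hV₂ : ∀ x ∈ Aᶜ, ∀ w ∉ Aᶜ, G.Adj x w → x = u ∨ x = v :=
    fun x hx w hw hxw => hA w (not_not.1 hw) x hx hxw.symm
  obtain ⟨c₁, hc₁⟩ :=
    Coloring.exists_extend (c₁.comp (Hom.ofLE (square_induce_le_induce_square_s9 huv hV₁)))
  obtain ⟨c₂, hc₂⟩ :=
    Coloring.exists_extend (c₂.comp (Hom.ofLE (square_induce_le_induce_square_s9 huv hV₂)))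
  set M := (G.neighborFinset u ∪ G.neighborFinset v) \ {u, v}
  have hM : ∀ y, y ∈ M ↔ (G.Adj u y ∨ G.Adj v y) ∧ y ≠ u ∧ y ≠ v := by
    simp [M, not_or]
  have hXY : #((M.filter (· ∈ A)).image c₁) + #((M.filter (· ∉ A)).image c₂) + 2 ≤ n := by
    have : #M + 2 ≤ 2 * Δ := card_neighborFinset_union_sdiff_pair_add_two_le hΔ huv
    have := card_filter_add_card_filter_not (s := M) (· ∈ A)
    have := card_image_le (s := M.filter (· ∈ A)) (f := c₁)
    have := card_image_le (s := M.filter (· ∉ A)) (f := c₂)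
    omega
  have huv₂ : G.square.Adj u v := ⟨huv.ne, Or.inl huv⟩
  have hY : ∀ i : ({u, v} : Set V), c₂ i ∉ (M.filter (· ∉ A)).image c₂ := by
    rintro ⟨i, rfl | rfl⟩ hi <;> obtain ⟨y, hy, hyi⟩ := mem_image.1 hi <;>
      obtain ⟨⟨hyM, hyu, hyv⟩, hyA⟩ := (mem_filter.1 hy).imp_left (hM y).1
    · exact hc₂ y hyA _ hu (square_adj_of_adj_or_adj huv hyM hyu) hyi
    · exact hc₂ y hyA _ hv (square_adj_of_adj_or_adj huv.symm hyM.symm hyv) hyi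
  obtain ⟨σ, hσ, hσY⟩ := Equiv.Perm.exists_extending_pair_forall_notMem
    (Set.injOn_pair.2 fun h => absurd h (hc₂ u hu v hv huv₂)).injective
    (Set.injOn_pair.2 fun h => absurd h (hc₁ u (by simp) v (by simp) huv₂)).injective
    (X := (M.filter (· ∈ A)).image c₁) hY (by simp [card_pair huv.ne]; omega)
  refine ⟨Coloring.mk (A.piecewise c₁ (σ ∘ c₂)) fun hxy => piecewise_ne_of_adj (I := {u, v}) hc₁
    (fun x hx y hy hxy => σ.injective.ne (hc₂ x hx y hy hxy)) ?_ ?_ hxy⟩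
  · rintro x (rfl | rfl)
    exacts [(hσ ⟨x, by simp⟩).symm, (hσ ⟨x, by simp⟩).symm]
  · intro x hx y hy hxy
    simp only [Set.mem_union, Set.mem_insert_iff, Set.mem_singleton_iff, not_or] at hy
    obtain ⟨hyA, hyu, hyv⟩ := hy
    obtain ⟨hxM, hyM⟩ := adj_or_adj_of_square_adj hA hx hyA hyu hyv hxy
    have hxu : x ≠ u := fun h => hu (h ▸ hx)
    have hxv : x ≠ v := fun h => hv (h ▸ hx)
    exact fun h => hσY _ (mem_image_of_mem c₂ (mem_filter.2 ⟨(hM y).2 ⟨hyM, hyu, hyv⟩, hyA⟩))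
      (h ▸ mem_image_of_mem c₁ (mem_filter.2 ⟨(hM x).2 ⟨hxM, hxu, hxv⟩, hx⟩))

end SimpleGraph

theorem MinimalCex.colorable_square_induce {V : Type*} [Fintype V] {G : SimpleGraph V} {Δ : ℕ}
    (hmin : MinimalCex Δ G) {s : Set V} {b : V} (hb : b ∉ s) :
    (G.induce s).square.Colorable (2 * Δ + 7) := by
  classical
  obtain ⟨hplanar, ⟨hdeg, -⟩, -, hsmaller⟩ := hmin
  let e := (G.induce s).overFinIso rfl
  let f := e.symm.toEmbedding.trans (Embedding.induce s)
  have hcol := hsmaller _ _ (hplanar.of_embedding f)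
    (fun i => (degN_le_of_embedding f i).trans (hdeg _)) (Or.inl (Fintype.card_subtype_lt hb))
  exact (chromaticNumber_le_iff_colorable.1 hcol).of_hom e.toEmbedding.squareHom

theorem stmt9_general {V : Type*} [Fintype V] (G : SimpleGraph V) (Δ : ℕ)
    (hmin : MinimalCex Δ G) :
    ∀ u v : V, G.Adj u v → (G.induce {x | x ≠ u ∧ x ≠ v}).Preconnected := by
  classical
  intro u v huv
  by_contra hdisc
  obtain ⟨A, hAS, ⟨a, ha⟩, ⟨b, hbS, hbA⟩, hAclosed⟩ := exists_separation_of_not_preconnected hdisc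
  have hsep : ∀ x ∈ A, ∀ y ∉ A, G.Adj x y → y = u ∨ y = v := fun x hx y hy hxy => by
    by_contra! h
    exact hy (hAclosed x hx y h hxy)
  have hdeg : ∀ x, G.degree x ≤ Δ := fun x => degN_eq_degree (G := G) x ▸ hmin.2.1.1 x
  have hcol : G.square.Colorable (2 * Δ + 7) := colorable_square_of_separation hdeg
    (by omega) huv (fun h => (hAS h).1 rfl) (fun h => (hAS h).2 rfl) hsep
    (hmin.colorable_square_induce (b := b) (by simp [hbA, hbS.1, hbS.2]))
    (hmin.colorable_square_induce (b := a) (by simpa using ha))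
  exact hmin.2.2.1.not_ge (chromaticNumber_le_iff_colorable.2 hcol)

/-- A minimal counterexample contains no edge `uv` such that `G − {u, v}` is
disconnected. -/
theorem stmt9 {V : Type*} [Fintype V] (G : SimpleGraph V) (Δ : ℕ) (hΔ : 9 ≤ Δ)
    (hmin : MinimalCex Δ G) :
    ∀ u v : V, G.Adj u v → (G.induce {x | x ≠ u ∧ x ≠ v}).Preconnected :=
  stmt9_general G Δ hmin
end

section
/- Let G be a minimal counterexample (fewest vertices, then most edges) among planar graphs of maximum degree Δ ≥ 9 with χ₂(G) > 2Δ + 7. Then G has no vertex of degree 1 and no vertex of degree 2. -/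
open SimpleGraph

/-!
Let `v` have degree at most 2 in a minimal counterexample `G`. Deleting `v` and joining its
neighbours gives a planar graph (the new edge is drawn along the path through `v`) with fewer
vertices and no larger degrees, so by minimality its square is `(2Δ + 7)`-colourable. Vertices
at distance at most 2 in `G` stay at distance at most 2, so this colours `G² - v`, and `v` has
at most `2(Δ + 1) < 2Δ + 7` neighbours in `G²`, so the colouring extends to `G²`.
-/

open Set

section Arcs

variable {X : Type*}

def reverseArc (γ : ℝ → X) : ℝ → X := fun t => γ (1 - t)

noncomputable def concatArc (γ₁ γ₂ : ℝ → X) : ℝ → X :=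
  fun t => if t ≤ 1 / 2 then γ₁ (2 * t) else γ₂ (2 * t - 1)

theorem image_reverseArc_Ioo (γ : ℝ → X) : reverseArc γ '' Ioo 0 1 = γ '' Ioo 0 1 := by
  have : (fun t : ℝ => 1 - t) '' Ioo 0 1 = Ioo 0 1 := by
    ext t
    simp only [mem_image, mem_Ioo]
    exact ⟨by rintro ⟨s, ⟨h0, h1⟩, rfl⟩; constructor <;> linarith,
      fun ⟨h0, h1⟩ => ⟨1 - t, ⟨by linarith, by linarith⟩, by ring⟩⟩
  rw [show reverseArc γ = γ ∘ fun t => 1 - t from rfl, image_comp, this]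

theorem concatArc_of_le {γ₁ γ₂ : ℝ → X} {t : ℝ} (ht : t ≤ 1 / 2) :
    concatArc γ₁ γ₂ t = γ₁ (2 * t) := if_pos ht

theorem concatArc_of_gt {γ₁ γ₂ : ℝ → X} {t : ℝ} (ht : 1 / 2 < t) :
    concatArc γ₁ γ₂ t = γ₂ (2 * t - 1) := if_neg (not_le.mpr ht)

theorem concatArc_image_Ioo_subset (γ₁ γ₂ : ℝ → X) :
    concatArc γ₁ γ₂ '' Ioo 0 1 ⊆ insert (γ₁ 1) (γ₁ '' Ioo 0 1 ∪ γ₂ '' Ioo 0 1) := by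
  rintro _ ⟨t, ⟨ht0, ht1⟩, rfl⟩
  rcases lt_trichotomy t (1 / 2) with ht2 | rfl | ht2
  · rw [concatArc_of_le ht2.le]
    exact Or.inr (Or.inl ⟨2 * t, ⟨by linarith, by linarith⟩, rfl⟩)
  · rw [concatArc_of_le le_rfl]
    norm_num
  · rw [concatArc_of_gt ht2]
    exact Or.inr (Or.inr ⟨2 * t - 1, ⟨by linarith, by linarith⟩, rfl⟩)

variable [TopologicalSpace X]

def IsArc (γ : ℝ → X) (p q : X) : Prop :=
  Continuous γ ∧ γ 0 = p ∧ γ 1 = q ∧ InjOn γ (Icc 0 1)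

theorem IsArc.reverseArc {γ : ℝ → X} {p q : X} (h : IsArc γ p q) :
    IsArc (reverseArc γ) q p := by
  obtain ⟨hc, h0, h1, hinj⟩ := h
  refine ⟨hc.comp (continuous_const.sub continuous_id), by simp [_root_.reverseArc, h1],
    by simp [_root_.reverseArc, h0], fun s hs t ht hst => ?_⟩
  have := hinj (x₁ := 1 - s) ⟨by linarith [hs.2], by linarith [hs.1]⟩
    ⟨by linarith [ht.2], by linarith [ht.1]⟩ hst
  linarith

theorem IsArc.concatArc {γ₁ γ₂ : ℝ → X} {p q r : X} (h₁ : IsArc γ₁ p q) (h₂ : IsArc γ₂ q r)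
    (hdisj : Disjoint (γ₁ '' Ico 0 1) (γ₂ '' Ioc 0 1)) : IsArc (concatArc γ₁ γ₂) p r := by
  obtain ⟨hc₁, h₁0, h₁1, hinj₁⟩ := h₁
  obtain ⟨hc₂, h₂0, h₂1, hinj₂⟩ := h₂
  -- by `hdisj` the halves can only meet at `γ₁ 1 = γ₂ 0`, which `γ₂` attains only at `0`
  have hcross : ∀ s ∈ Icc (0 : ℝ) 1, ∀ t ∈ Icc (0 : ℝ) 1, s ≤ 1 / 2 → 1 / 2 < t →
      γ₁ (2 * s) ≠ γ₂ (2 * t - 1) := by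
    intro s hs t ht hs2 ht2 hst
    have hmem : γ₂ (2 * t - 1) ∈ γ₂ '' Ioc 0 1 := ⟨_, ⟨by linarith, by linarith [ht.2]⟩, rfl⟩
    rcases hs2.lt_or_eq with hs2 | hs2
    · exact disjoint_left.mp hdisj ⟨2 * s, ⟨by linarith [hs.1], by linarith⟩, hst⟩ hmem
    · rw [hs2, show (2 : ℝ) * (1 / 2) = 1 by norm_num, h₁1, ← h₂0] at hst
      have := hinj₂ ⟨le_refl 0, zero_le_one⟩ ⟨by linarith, by linarith [ht.2]⟩ hst
      linarith
  refine ⟨?_, ?_, ?_, ?_⟩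
  · refine Continuous.if_le (hc₁.comp (continuous_const_mul 2))
      (hc₂.comp ((continuous_const_mul 2).sub continuous_const)) continuous_id continuous_const ?_
    rintro t (rfl : t = 1 / 2)
    norm_num [h₁1, h₂0]
  · rw [concatArc_of_le (by norm_num)]
    simpa using h₁0
  · rw [concatArc_of_gt (by norm_num)]
    norm_num [h₂1]
  · intro s hs t ht hst
    rcases le_or_gt s (1 / 2) with hs2 | hs2 <;> rcases le_or_gt t (1 / 2) with ht2 | ht2
    · rw [concatArc_of_le hs2, concatArc_of_le ht2] at hst
      have := hinj₁ ⟨by linarith [hs.1], by linarith⟩ ⟨by linarith [ht.1], by linarith⟩ hst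
      linarith
    · rw [concatArc_of_le hs2, concatArc_of_gt ht2] at hst
      exact absurd hst (hcross s hs t ht hs2 ht2)
    · rw [concatArc_of_gt hs2, concatArc_of_le ht2] at hst
      exact absurd hst.symm (hcross t ht s hs ht2 hs2)
    · rw [concatArc_of_gt hs2, concatArc_of_gt ht2] at hst
      have := hinj₂ ⟨by linarith, by linarith [hs.2]⟩ ⟨by linarith, by linarith [ht.2]⟩ hst
      linarith

end Arcs

structure PlaneDrawing {V : Type*} (G : SimpleGraph V) where
  pos : V → ℝ × ℝ
  arc : V → V → ℝ → ℝ × ℝ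
  pos_injective : Function.Injective pos
  isArc : ∀ ⦃u v⦄, G.Adj u v → IsArc (arc u v) (pos u) (pos v)
  pos_notMem : ∀ ⦃u v⦄, G.Adj u v → ∀ w, pos w ∉ arc u v '' Ioo 0 1
  disjoint : ∀ ⦃u v x y⦄, G.Adj u v → G.Adj x y → s(u, v) ≠ s(x, y) →
    Disjoint (arc u v '' Ioo 0 1) (arc x y '' Ioo 0 1)

theorem isPlanar_iff_nonempty_planeDrawing {V : Type*} {G : SimpleGraph V} :
    IsPlanar G ↔ Nonempty (PlaneDrawing G) := by
  constructor
  · rintro ⟨pos, arc, hinj, hedge, hdisj⟩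
    exact ⟨⟨pos, arc, hinj,
      fun u v h => (hedge u v h).elim fun hc h' => ⟨hc, h'.1, h'.2.1, h'.2.2.1⟩,
      fun u v h => (hedge u v h).2.2.2.2, hdisj⟩⟩
  · rintro ⟨D⟩
    exact ⟨D.pos, D.arc, D.pos_injective,
      fun u v h => ⟨(D.isArc h).1, (D.isArc h).2.1, (D.isArc h).2.2.1, (D.isArc h).2.2.2,
        D.pos_notMem h⟩, fun _ _ _ _ => @D.disjoint _ _ _ _⟩

namespace PlaneDrawing

variable {V W : Type*} {G : SimpleGraph V} (D : PlaneDrawing G)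

def comap {H : SimpleGraph W} (f : H →g G) (hf : Function.Injective f) : PlaneDrawing H where
  pos := D.pos ∘ f
  arc a b := D.arc (f a) (f b)
  pos_injective := D.pos_injective.comp hf
  isArc _ _ h := D.isArc (f.map_adj h)
  pos_notMem _ _ h w := D.pos_notMem (f.map_adj h) (f w)
  disjoint _ _ _ _ hab hxy hne := D.disjoint (f.map_adj hab) (f.map_adj hxy) fun h =>
    hne (Sym2.map.injective hf (by simpa only [Sym2.map_mk] using h))

variable {u v w : V}

noncomputable def smoothArc (u v w : V) : ℝ → ℝ × ℝ := concatArc (D.arc u v) (D.arc v w)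

theorem isArc_smoothArc (hu : G.Adj v u) (hw : G.Adj v w) (huw : u ≠ w) :
    IsArc (D.smoothArc u v w) (D.pos u) (D.pos w) := by
  refine (D.isArc hu.symm).concatArc (D.isArc hw) ?_
  have hend₁ : D.arc u v 0 = D.pos u := (D.isArc hu.symm).2.1
  have hend₂ : D.arc v w 1 = D.pos w := (D.isArc hw).2.2.1
  rw [← Ioo_insert_left zero_lt_one, ← Ioo_insert_right zero_lt_one, image_insert_eq,
    image_insert_eq, hend₁, hend₂, disjoint_insert_left, disjoint_insert_right]
  refine ⟨fun h => ?_, fun h => ?_, D.disjoint hu.symm hw fun h => ?_⟩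
  · rcases h with h | h
    · exact huw (D.pos_injective h)
    · exact D.pos_notMem hw u h
  · exact D.pos_notMem hu.symm w h
  · rcases Sym2.eq_iff.mp h with ⟨h, -⟩ | ⟨h, -⟩
    exacts [hu.ne' h, huw h]

theorem smoothArc_image_Ioo_subset (hu : G.Adj v u) :
    D.smoothArc u v w '' Ioo 0 1 ⊆
      insert (D.pos v) (D.arc u v '' Ioo 0 1 ∪ D.arc v w '' Ioo 0 1) := by
  rw [← (D.isArc hu.symm).2.2.1]
  exact concatArc_image_Ioo_subset _ _

theorem pos_notMem_smoothArc (hu : G.Adj v u) (hw : G.Adj v w) {x : V} (hx : x ≠ v) :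
    D.pos x ∉ D.smoothArc u v w '' Ioo 0 1 := fun h => by
  rcases D.smoothArc_image_Ioo_subset hu h with h | h | h
  · exact hx (D.pos_injective h)
  · exact D.pos_notMem hu.symm x h
  · exact D.pos_notMem hw x h

theorem disjoint_smoothArc (hu : G.Adj v u) (hw : G.Adj v w) {x y : V} (hx : x ≠ v)
    (hy : y ≠ v) (hxy : G.Adj x y) :
    Disjoint (D.smoothArc u v w '' Ioo 0 1) (D.arc x y '' Ioo 0 1) := by
  refine Disjoint.mono_left (D.smoothArc_image_Ioo_subset hu) ?_
  refine disjoint_insert_left.mpr ⟨D.pos_notMem hxy v, disjoint_union_left.mpr ⟨?_, ?_⟩⟩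
  · refine D.disjoint hu.symm hxy fun h => ?_
    rcases Sym2.eq_iff.mp h with ⟨-, h⟩ | ⟨-, h⟩
    exacts [hy h.symm, hx h.symm]
  · refine D.disjoint hw hxy fun h => ?_
    rcases Sym2.eq_iff.mp h with ⟨h, -⟩ | ⟨h, -⟩
    exacts [hx h.symm, hy h.symm]

open Classical in
/-- The edge `uw` is drawn along the path `u v w`. -/
noncomputable def smoothing (hu : G.Adj v u) (hw : G.Adj v w) (huw : u ≠ w)
    (H : SimpleGraph {x // x ≠ v}) (hH : ∀ a b, H.Adj a b → G.Adj a b ∨ s(a.1, b.1) = s(u, w)) :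
    PlaneDrawing H :=
  let arc : {x // x ≠ v} → {x // x ≠ v} → ℝ → ℝ × ℝ := fun a b => if s(a.1, b.1) = s(u, w) then
      (if a.1 = u then D.smoothArc u v w else reverseArc (D.smoothArc u v w))
    else D.arc a b
  have arc_of_eq : ∀ a b : {x // x ≠ v}, s(a.1, b.1) = s(u, w) →
      IsArc (arc a b) (D.pos a) (D.pos b) ∧
        arc a b '' Ioo 0 1 = D.smoothArc u v w '' Ioo 0 1 := by
    intro a b hab
    have hγ := D.isArc_smoothArc hu hw huw
    simp only [arc, hab, if_true]
    rcases Sym2.eq_iff.mp hab with ⟨ha, hb⟩ | ⟨ha, hb⟩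
    · rw [if_pos ha, ha, hb]
      exact ⟨hγ, rfl⟩
    · rw [if_neg (ha ▸ huw.symm), ha, hb, image_reverseArc_Ioo]
      exact ⟨hγ.reverseArc, rfl⟩
  have arc_of_ne : ∀ a b : {x // x ≠ v}, s(a.1, b.1) ≠ s(u, w) → arc a b = D.arc a b :=
    fun _ _ hab => by simp only [arc, hab, if_false]
  { pos a := D.pos a
    arc := arc
    pos_injective := D.pos_injective.comp Subtype.val_injective
    isArc a b hab := by
      by_cases h : s(a.1, b.1) = s(u, w)
      · exact (arc_of_eq a b h).1
      · rw [arc_of_ne a b h]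
        exact D.isArc ((hH a b hab).resolve_right h)
    pos_notMem a b hab x := by
      by_cases h : s(a.1, b.1) = s(u, w)
      · rw [(arc_of_eq a b h).2]
        exact D.pos_notMem_smoothArc hu hw x.2
      · rw [arc_of_ne a b h]
        exact D.pos_notMem ((hH a b hab).resolve_right h) x
    disjoint a b x y hab hxy hne := by
      have hne' : s(a.1, b.1) ≠ s(x.1, y.1) := fun h =>
        hne (Sym2.map.injective Subtype.val_injective (by simpa only [Sym2.map_mk] using h))
      by_cases h₁ : s(a.1, b.1) = s(u, w) <;> by_cases h₂ : s(x.1, y.1) = s(u, w)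
      · exact absurd (h₁.trans h₂.symm) hne'
      · rw [(arc_of_eq a b h₁).2, arc_of_ne x y h₂]
        exact D.disjoint_smoothArc hu hw x.2 y.2 ((hH x y hxy).resolve_right h₂)
      · rw [arc_of_ne a b h₁, (arc_of_eq x y h₂).2]
        exact (D.disjoint_smoothArc hu hw a.2 b.2 ((hH a b hab).resolve_right h₁)).symm
      · rw [arc_of_ne a b h₁, arc_of_ne x y h₂]
        exact D.disjoint ((hH a b hab).resolve_right h₁) ((hH x y hxy).resolve_right h₂) hne' }

end PlaneDrawing

theorem IsPlanar.of_injective_hom {V W : Type*} {G : SimpleGraph V} {H : SimpleGraph W}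
    (hG : IsPlanar G) (f : H →g G) (hf : Function.Injective f) : IsPlanar H :=
  let ⟨D⟩ := isPlanar_iff_nonempty_planeDrawing.mp hG
  isPlanar_iff_nonempty_planeDrawing.mpr ⟨D.comap f hf⟩

namespace SimpleGraph

variable {V W : Type*}

theorem degN_eq_ncard (G : SimpleGraph V) (v : V) : degN G v = (G.neighborSet v).ncard :=
  (Nat.card_coe_set_eq _).symm

theorem Iso.degN_eq {G : SimpleGraph V} {H : SimpleGraph W} (e : G ≃g H) (v : V) :
    degN H (e v) = degN G v :=
  (Nat.card_congr (e.toEquiv.subtypeEquiv fun _ => e.map_adj_iff.symm)).symm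

def Hom.square {G : SimpleGraph V} {H : SimpleGraph W} (f : G →g H)
    (hf : Function.Injective f) : G.square →g H.square where
  toFun := f
  map_rel' := fun ⟨hne, h⟩ =>
    ⟨hf.ne hne, h.imp f.map_adj fun ⟨z, h₁, h₂⟩ => ⟨f z, f.map_adj h₁, f.map_adj h₂⟩⟩

theorem colorable_of_ncard_neighborSet_lt [Finite V] {K : SimpleGraph V} {v : V}
    {H : SimpleGraph {x // x ≠ v}} {n : ℕ} (hKH : ∀ x y : {x // x ≠ v}, K.Adj x y → H.Adj x y)
    (hH : H.Colorable n) (hv : (K.neighborSet v).ncard < n) : K.Colorable n := by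
  classical
  obtain ⟨c⟩ := hH
  let S : Set {x // x ≠ v} := {x | K.Adj v x}
  have hS : (c '' S).ncard < n := calc
    (c '' S).ncard ≤ S.ncard := ncard_image_le (toFinite S)
    _ ≤ (K.neighborSet v).ncard :=
      ncard_le_ncard_of_injOn Subtype.val (fun _ hx => hx) Subtype.val_injective.injOn
    _ < n := hv
  obtain ⟨i, hi⟩ : ∃ i, i ∉ c '' S := by
    by_contra! h
    rw [eq_univ_of_forall h, ncard_univ, Nat.card_fin] at hS
    exact hS.false
  let c' : V → Fin n := fun x => if h : x = v then i else c ⟨x, h⟩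
  have hc'v : c' v = i := dif_pos rfl
  have hc' : ∀ x (hx : x ≠ v), c' x = c ⟨x, hx⟩ := fun x hx => dif_neg hx
  have hnew : ∀ x (hx : x ≠ v), K.Adj v x → c' x ≠ i := fun x hx hvx h =>
    hi ⟨⟨x, hx⟩, hvx, (hc' x hx).symm.trans h⟩
  refine ⟨Coloring.mk c' fun {x y} hxy => ?_⟩
  by_cases hx : x = v
  · subst hx
    rw [hc'v]
    exact (hnew y hxy.ne' hxy).symm
  by_cases hy : y = v
  · subst hy
    rw [hc'v]
    exact hnew x hx hxy.symm
  rw [hc' x hx, hc' y hy]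
  exact c.valid (hKH ⟨x, hx⟩ ⟨y, hy⟩ hxy)

theorem ncard_square_neighborSet_le [Finite V] {G : SimpleGraph V} {Δ : ℕ}
    (hΔ : ∀ u, degN G u ≤ Δ) (v : V) :
    (G.square.neighborSet v).ncard ≤ degN G v * (Δ + 1) := by
  have : Fintype {u // G.Adj v u} := Fintype.ofFinite _
  have hsub : G.square.neighborSet v ⊆ ⋃ u : {u // G.Adj v u}, insert u.1 (G.neighborSet u) := by
    rintro x ⟨-, hx | ⟨u, hvu, hux⟩⟩
    · exact mem_iUnion.mpr ⟨⟨x, hx⟩, mem_insert _ _⟩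
    · exact mem_iUnion.mpr ⟨⟨u, hvu⟩, mem_insert_of_mem _ hux⟩
  calc (G.square.neighborSet v).ncard
      ≤ (⋃ u : {u // G.Adj v u}, insert u.1 (G.neighborSet u)).ncard := ncard_le_ncard hsub
    _ ≤ ∑ u : {u // G.Adj v u}, (insert u.1 (G.neighborSet u)).ncard :=
      ncard_iUnion_le_of_fintype _
    _ ≤ ∑ _u : {u // G.Adj v u}, (Δ + 1) := Finset.sum_le_sum fun u _ =>
      (ncard_insert_le _ _).trans (by rw [← degN_eq_ncard]; exact Nat.succ_le_succ (hΔ u))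
    _ = degN G v * (Δ + 1) := by simp [degN, Nat.card_eq_fintype_card]

theorem eq_or_eq_of_degN_le_two [Finite V] {G : SimpleGraph V} {v u w x : V}
    (hv : degN G v ≤ 2) (huw : u ≠ w) (hu : G.Adj v u) (hw : G.Adj v w) (hx : G.Adj v x) :
    x = u ∨ x = w := by
  by_contra! h
  have h3 : ({u, w, x} : Set V).ncard = 3 :=
    ncard_eq_three.mpr ⟨u, w, x, huw, h.1.symm, h.2.symm, rfl⟩
  have hle : ({u, w, x} : Set V).ncard ≤ (G.neighborSet v).ncard :=
    ncard_le_ncard (by simp [insert_subset_iff, hu, hw, hx])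
  rw [← degN_eq_ncard] at hle
  omega

/-- Delete `v` and make its neighbourhood a clique: for `v` of degree 2 with neighbours `u`, `w`
this is the graph `(G - v) + uw`. -/
def eliminate (G : SimpleGraph V) (v : V) : SimpleGraph {x // x ≠ v} where
  Adj a b := a ≠ b ∧ (G.Adj a b ∨ G.Adj v a ∧ G.Adj v b)
  symm := ⟨fun _ _ h => ⟨h.1.symm, h.2.imp (fun h => h.symm) And.symm⟩⟩
  loopless := ⟨fun _ h => h.1 rfl⟩

variable {G : SimpleGraph V} {v : V}

theorem square_adj_eliminate {x y : {x // x ≠ v}} (h : G.square.Adj x y) :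
    (G.eliminate v).square.Adj x y := by
  obtain ⟨hne, hxy | ⟨z, hxz, hzy⟩⟩ := h
  · exact ⟨Subtype.coe_ne_coe.mp hne, Or.inl ⟨Subtype.coe_ne_coe.mp hne, Or.inl hxy⟩⟩
  refine ⟨Subtype.coe_ne_coe.mp hne, ?_⟩
  by_cases hz : z = v
  · subst hz
    exact Or.inl ⟨Subtype.coe_ne_coe.mp hne, Or.inr ⟨hxz.symm, hzy⟩⟩
  · exact Or.inr ⟨⟨z, hz⟩, ⟨Subtype.coe_ne_coe.mp hxz.ne, Or.inl hxz⟩,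
      ⟨Subtype.coe_ne_coe.mp hzy.ne, Or.inl hzy⟩⟩

theorem degN_eliminate_le [Finite V] (hv : degN G v ≤ 2) (a : {x // x ≠ v}) :
    degN (G.eliminate v) a ≤ degN G a := by
  classical
  -- the new neighbour of `a`, if any, takes the place of `v`
  let f : {b // (G.eliminate v).Adj a b} → {x // G.Adj a x} := fun b =>
    if h : G.Adj a b.1 then ⟨b.1, h⟩ else ⟨v, ((b.2.2.resolve_left h).1).symm⟩
  refine Nat.card_le_card_of_injective f fun b b' hbb' => ?_
  by_cases h : G.Adj a b.1 <;> by_cases h' : G.Adj a b'.1 <;>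
    simp only [f, h, h', dite_true, dite_false, Subtype.mk.injEq] at hbb'
  · exact Subtype.ext (Subtype.ext hbb')
  · exact absurd hbb' b.1.2
  · exact absurd hbb'.symm b'.1.2
  · obtain ⟨hva, hvb⟩ := b.2.2.resolve_left h
    rcases eq_or_eq_of_degN_le_two hv (Subtype.coe_ne_coe.mpr b.2.1) hva hvb
      (b'.2.2.resolve_left h').2 with h | h
    · exact absurd (Subtype.ext h).symm b'.2.1
    · exact Subtype.ext (Subtype.ext h.symm)

theorem isPlanar_eliminate [Finite V] (hG : IsPlanar G) (hv : degN G v ≤ 2) :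
    IsPlanar (G.eliminate v) := by
  by_cases h : ∃ u w, u ≠ w ∧ G.Adj v u ∧ G.Adj v w
  · obtain ⟨u, w, huw, hu, hw⟩ := h
    obtain ⟨D⟩ := isPlanar_iff_nonempty_planeDrawing.mp hG
    refine isPlanar_iff_nonempty_planeDrawing.mpr ⟨D.smoothing hu hw huw _ fun a b hab => ?_⟩
    refine hab.2.imp id fun ⟨ha, hb⟩ => ?_
    have hab' : a.1 ≠ b.1 := Subtype.coe_ne_coe.mpr hab.1
    rcases eq_or_eq_of_degN_le_two hv huw hu hw ha with rfl | rfl <;>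
      rcases eq_or_eq_of_degN_le_two hv huw hu hw hb with hb' | hb'
    all_goals first | exact absurd hb'.symm hab' | simp only [hb', Sym2.eq_swap]
  · push Not at h
    refine hG.of_injective_hom ⟨Subtype.val, fun {a b} hab => ?_⟩ Subtype.val_injective
    exact hab.2.resolve_right fun ⟨ha, hb⟩ => h a b (Subtype.coe_ne_coe.mpr hab.1) ha hb

end SimpleGraph

open SimpleGraph

theorem MinimalCex.colorable_square_of_card_lt {V W : Type*} [Fintype V] {G : SimpleGraph V}
    {Δ : ℕ} (hmin : MinimalCex Δ G) [Fintype W] {H : SimpleGraph W} (hH : IsPlanar H)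
    (hdeg : ∀ w, degN H w ≤ Δ) (hcard : Fintype.card W < Fintype.card V) :
    H.square.Colorable (2 * Δ + 7) := by
  let e := H.overFinIso rfl
  have hchi := hmin.2.2.2 _ (H.overFin rfl) (hH.of_injective_hom e.symm.toHom e.symm.injective)
    (fun i => by rw [← e.apply_symm_apply i, e.degN_eq]; exact hdeg _) (Or.inl hcard)
  exact (chromaticNumber_le_iff_colorable.mp hchi).of_hom (e.toHom.square e.injective)

theorem MinimalCex.three_le_degN {V : Type*} [Fintype V] {G : SimpleGraph V} {Δ : ℕ}
    (hmin : MinimalCex Δ G) (v : V) : 3 ≤ degN G v := by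
  classical
  have hΔ := hmin.2.1.1
  by_contra! hv
  replace hv : degN G v ≤ 2 := by omega
  have hH : (G.eliminate v).square.Colorable (2 * Δ + 7) :=
    hmin.colorable_square_of_card_lt (isPlanar_eliminate hmin.1 hv)
      (fun a => (degN_eliminate_le hv a).trans (hΔ a)) (Fintype.card_subtype_lt (not_not.mpr rfl))
  have hsq : (G.square.neighborSet v).ncard < 2 * Δ + 7 := calc
    _ ≤ degN G v * (Δ + 1) := ncard_square_neighborSet_le hΔ v
    _ ≤ 2 * (Δ + 1) := Nat.mul_le_mul_right _ hv
    _ < 2 * Δ + 7 := by omega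
  exact hmin.2.2.1.not_ge (colorable_of_ncard_neighborSet_lt (fun _ _ => square_adj_eliminate) hH
    hsq).chromaticNumber_le

theorem stmt11_general {V : Type*} [Fintype V] (G : SimpleGraph V) (Δ : ℕ)
    (hmin : MinimalCex Δ G) :
    ∀ v : V, degN G v ≠ 1 ∧ degN G v ≠ 2 := fun v => by
  have := hmin.three_le_degN v
  omega

/-- A minimal counterexample has no vertex of degree 1 and no vertex of degree 2. -/
theorem stmt11 {V : Type*} [Fintype V] (G : SimpleGraph V) (Δ : ℕ) (hΔ : 9 ≤ Δ)
    (hmin : MinimalCex Δ G) :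
    ∀ v : V, degN G v ≠ 1 ∧ degN G v ≠ 2 :=
  stmt11_general G Δ hmin
end
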